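/- arXiv:math/0606356 — 2 statements merged into one kernel-verified Lean document; each statement's English description precedes it below -/
import Mathlib

section
/- Let Δ be a (d-1)-dimensional simplicial complex whose h-vector is reciprocal, i.e., h_i^Δ = h_{d-i}^Δ for 0 ≤ i ≤ d. Then the h-vector of the barycentric subdivision sd(Δ) is also reciprocal: h_j^{sd(Δ)} = h_{d-j}^{sd(Δ)} for 0 ≤ j ≤ d. -/
open Finset

/-- `Δ` is an (abstract) simplicial complex: a collection of finite subsets of the
vertex set containing the empty face and closed under taking subsets. -/
def IsComplex {α : Type*} (Δ : Finset (Finset α)) : Prop :=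
  ∅ ∈ Δ ∧ ∀ s ∈ Δ, ∀ t, t ⊆ s → t ∈ Δ

/-- `Δ` has dimension `d - 1`: every face has at most `d` vertices and some face
has exactly `d` vertices. -/
def HasDim {α : Type*} (Δ : Finset (Finset α)) (d : ℕ) : Prop :=
  (∀ s ∈ Δ, s.card ≤ d) ∧ ∃ s ∈ Δ, s.card = d

/-- `fnum Δ i = f_{i-1}`, the number of faces of `Δ` with `i` vertices
(i.e. of dimension `i-1`). -/
def fnum {α : Type*} (Δ : Finset (Finset α)) (i : ℕ) : ℕ :=
  (Δ.filter (fun s => s.card = i)).card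

/-- The entries of the `h`-vector of a `(d-1)`-dimensional complex:
`h_j = Σ_{i=0}^{j} (-1)^{j-i} binom(d-i, j-i) f_{i-1}`. -/
def hnum {α : Type*} (Δ : Finset (Finset α)) (d j : ℕ) : ℤ :=
  ∑ i ∈ Finset.range (j + 1),
    (-1 : ℤ) ^ (j - i) * ((d - i).choose (j - i)) * (fnum Δ i : ℤ)

/-- The barycentric subdivision of `Δ`: the simplicial complex whose vertices are
the nonempty faces of `Δ` and whose faces are the chains of nonempty faces. -/
def sd {α : Type*} [DecidableEq α] (Δ : Finset (Finset α)) :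
    Finset (Finset (Finset α)) :=
  (Δ.erase ∅).powerset.filter (fun c => ∀ s ∈ c, ∀ t ∈ c, s ⊆ t ∨ t ⊆ s)

/-!
Let `f(t) = ∑ fᵢ tⁱ` be the face polynomial of `Δ`. Inverting the definition of the `h`-vector
gives `f(t) = ∑ hⱼ tʲ (1 + t)^(d-j)`, so reciprocity of `h^Δ` is the Dehn–Sommerville symmetry
`f(-1-t) = (-1)^d f(t)`. Splitting chains of faces at their top face shows
`∑_{c ∈ sd Δ} C(ℓ, |c|) = ∑_{F ∈ Δ} ℓ^|F| = f(ℓ)` for every `ℓ ∈ ℕ`, and comparing coefficients in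
`(1 - X)^(d+1) ∑_ℓ f(ℓ) Xˡ` expresses `h_j^{sd Δ}` as the partial alternating sum
`∑_{r ≤ j} (-1)^r C(d+1, r) f(j - r)`. As `f` has degree at most `d`, its `(d+1)`-st finite
difference vanishes; together with the symmetry of `f` this turns the sum for `j` into the sum for
`d - j`.
-/

section HVector

variable {R : Type*} [CommRing R]

-- `hnum Δ d` is `hTransform d (fun i => (fnum Δ i : ℤ))` definitionally.
def hTransform (d : ℕ) (f : ℕ → R) (j : ℕ) : R :=
  ∑ i ∈ range (j + 1), (-1) ^ (j - i) * ((d - i).choose (j - i) : R) * f i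

theorem sum_hTransform_mul_pow_mul_one_add_pow (d : ℕ) (f : ℕ → R) (x : R) :
    ∑ j ∈ range (d + 1), hTransform d f j * x ^ j * (1 + x) ^ (d - j) =
      ∑ i ∈ range (d + 1), f i * x ^ i := by
  have inner (i : ℕ) (hi : i ≤ d) :
      ∑ j ∈ Ico i (d + 1), (-1) ^ (j - i) * ((d - i).choose (j - i) : R) * x ^ j * (1 + x) ^ (d - j)
        = x ^ i := by
    rw [sum_Ico_eq_sum_range, show d + 1 - i = d - i + 1 by omega]
    calc _ = x ^ i * ∑ k ∈ range (d - i + 1),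
          (-x) ^ k * (1 + x) ^ (d - i - k) * ((d - i).choose k : R) := by
          rw [mul_sum]
          refine sum_congr rfl fun k hk => ?_
          rw [mem_range] at hk
          rw [Nat.add_sub_cancel_left, show d - (i + k) = d - i - k by omega, neg_pow, pow_add]
          ring
      _ = x ^ i := by rw [← add_pow, show -x + (1 + x) = 1 by ring, one_pow, mul_one]
  simp only [hTransform, sum_mul, range_eq_Ico]
  rw [← sum_Ico_Ico_comm]
  refine sum_congr rfl fun i hi => ?_
  rw [mem_Ico] at hi
  rw [← inner i (by omega), mul_sum]
  refine sum_congr rfl fun j _ => ?_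
  ring

theorem sum_mul_neg_one_sub_pow_of_hTransform_symm {d : ℕ} {f : ℕ → R}
    (hf : ∀ j ≤ d, hTransform d f j = hTransform d f (d - j)) (x : R) :
    ∑ i ∈ range (d + 1), f i * (-1 - x) ^ i = (-1) ^ d * ∑ i ∈ range (d + 1), f i * x ^ i := by
  rw [← sum_hTransform_mul_pow_mul_one_add_pow, ← sum_hTransform_mul_pow_mul_one_add_pow, mul_sum,
    ← sum_range_reflect]
  refine sum_congr rfl fun j hj => ?_
  rw [mem_range] at hj
  rw [show d + 1 - 1 - j = d - j by omega, hf j (by omega), show d - (d - j) = j by omega,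
    show (-1 - x) = -(1 + x) by ring, show 1 + -(1 + x) = -x by ring, neg_pow, neg_pow]
  have hsign : (-1 : R) ^ d = (-1) ^ (d - j) * (-1) ^ j := by
    rw [← pow_add, Nat.sub_add_cancel (by omega)]
  rw [hsign]
  ring

namespace PowerSeries

theorem coeff_one_sub_X_pow (n r : ℕ) :
    coeff r ((1 - X : R⟦X⟧) ^ n) = (-1) ^ r * (n.choose r : R) := by
  have h1 : (1 - X : R⟦X⟧) ^ n = rescale (-1) (((1 + Polynomial.X) ^ n : Polynomial R) : R⟦X⟧) := by
    simp [sub_eq_add_neg]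
  rw [h1, coeff_rescale, Polynomial.coeff_coe, Polynomial.coeff_one_add_X_pow]

theorem mk_choose_eq_X_pow_mul_invOneSubPow (i : ℕ) :
    (mk fun n => (n.choose i : R)) = X ^ i * (invOneSubPow R (i + 1)).val := by
  ext n
  rw [coeff_X_pow_mul', invOneSubPow_val_succ_eq_mk_add_choose, coeff_mk, coeff_mk]
  split_ifs with h
  · rw [Nat.add_sub_cancel' h]
  · rw [Nat.choose_eq_zero_of_lt (by omega), Nat.cast_zero]

theorem one_sub_X_pow_mul_mk_choose {d i : ℕ} (hi : i ≤ d) :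
    (1 - X : R⟦X⟧) ^ (d + 1) * mk (fun n => (n.choose i : R)) = X ^ i * (1 - X) ^ (d - i) := by
  rw [mk_choose_eq_X_pow_mul_invOneSubPow, mul_left_comm, show d + 1 = d - i + (i + 1) by omega,
    one_sub_pow_add_mul_invOneSubPow_val_eq_one_sub_pow]

end PowerSeries

open PowerSeries in
theorem hTransform_eq_alternating_sum (d : ℕ) (g : ℕ → R) {j : ℕ} (hj : j ≤ d) :
    hTransform d g j = ∑ r ∈ range (j + 1), (-1) ^ r * ((d + 1).choose r : R) *
      ∑ i ∈ range (d + 1), g i * ((j - r).choose i : R) := by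
  have hmk : (mk fun n => ∑ i ∈ range (d + 1), g i * (n.choose i : R)) =
      ∑ i ∈ range (d + 1), C (g i) * mk fun n => (n.choose i : R) := by
    ext n
    simp [map_sum, coeff_C_mul]
  have hgen : (1 - X : R⟦X⟧) ^ (d + 1) * mk (fun n => ∑ i ∈ range (d + 1), g i * (n.choose i : R)) =
      ∑ i ∈ range (d + 1), C (g i) * (X ^ i * (1 - X) ^ (d - i)) := by
    rw [hmk, mul_sum]
    refine sum_congr rfl fun i hi => ?_
    rw [mul_left_comm, one_sub_X_pow_mul_mk_choose (Nat.lt_succ_iff.1 (mem_range.1 hi))]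
  have hcoeff := congrArg (coeff j) hgen
  rw [coeff_mul, Nat.sum_antidiagonal_eq_sum_range_succ_mk, map_sum] at hcoeff
  simp only [coeff_one_sub_X_pow, coeff_mk, coeff_C_mul, coeff_X_pow_mul'] at hcoeff
  have hrange : (range (d + 1)).filter (· ≤ j) = range (j + 1) := by
    ext i; simp only [mem_filter, mem_range]; omega
  rw [hcoeff, hTransform]
  simp only [mul_ite, mul_zero]
  rw [← sum_filter, hrange]
  exact sum_congr rfl fun i _ => mul_comm _ _

theorem neg_one_pow_sub_of_le {n k : ℕ} (h : k ≤ n) : (-1 : R) ^ (n - k) = (-1) ^ n * (-1) ^ k := by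
  conv_rhs => rw [← Nat.sub_add_cancel h, pow_add, mul_assoc, ← pow_add, ← two_mul, pow_mul,
    neg_one_sq, one_pow, mul_one]

theorem alternating_sum_choose_symm_of_fwdDiff {d : ℕ} {φ : ℤ → R} (hφ : (fwdDiff 1)^[d + 1] φ = 0)
    (hsymm : ∀ t, φ (-1 - t) = (-1) ^ d * φ t) {j : ℕ} (hj : j ≤ d) :
    ∑ r ∈ range (j + 1), (-1) ^ r * ((d + 1).choose r : R) * φ ↑(j - r) =
      ∑ r ∈ range (d - j + 1), (-1) ^ r * ((d + 1).choose r : R) * φ ↑(d - j - r) := by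
  -- Split the vanishing `(d+1)`-st difference at `-j-1` after `j + 1` terms: by the symmetry of
  -- `φ` the first part is minus the left side, the second is the right side summed backwards.
  have h0 := congrFun hφ (-j - 1)
  rw [fwdDiff_iter_eq_sum_shift, Pi.zero_apply, show d + 1 + 1 = j + 1 + (d - j + 1) by omega,
    sum_range_add] at h0
  have low : ∀ k ∈ range (j + 1),
      ((-1 : ℤ) ^ (d + 1 - k) * (d + 1).choose k) • φ (-j - 1 + k • 1) =
        -((-1) ^ k * ((d + 1).choose k : R) * φ ↑(j - k)) := by
    intro k hk
    rw [mem_range] at hk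
    rw [show (-j - 1 + k • 1 : ℤ) = -1 - ↑(j - k) by
        push_cast [Nat.cast_sub (by omega : k ≤ j)]; ring,
      hsymm, zsmul_eq_mul]
    push_cast
    have hdd : (-1 : R) ^ d * (-1) ^ d = 1 := by
      rw [← pow_add, ← two_mul, pow_mul, neg_one_sq, one_pow]
    rw [neg_one_pow_sub_of_le (by omega : k ≤ d + 1)]
    linear_combination (-((-1) ^ k * ((d + 1).choose k : R) * φ ↑(j - k))) * hdd
  have high : ∀ m ∈ range (d - j + 1),
      ((-1 : ℤ) ^ (d + 1 - (j + 1 + m)) * (d + 1).choose (j + 1 + m)) •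
          φ (-j - 1 + (j + 1 + m) • 1) =
        (-1) ^ (d - j - m) * ((d + 1).choose (d - j - m) : R) * φ ↑(d - j - (d - j - m)) := by
    intro m hm
    rw [mem_range] at hm
    rw [show (-j - 1 + (j + 1 + m) • 1 : ℤ) = m by ring,
      show d - j - (d - j - m) = m by omega, show d + 1 - (j + 1 + m) = d - j - m by omega,
      Nat.choose_symm_of_eq_add (by omega : d + 1 = (j + 1 + m) + (d - j - m)), zsmul_eq_mul]
    push_cast
    ring
  rw [sum_congr rfl low, sum_congr rfl high, sum_neg_distrib] at h0
  rw [← sum_range_reflect _ (d - j + 1), Nat.add_sub_cancel]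
  linear_combination -h0

theorem hTransform_symm_of_sum_choose_eq {d : ℕ} {f g : ℕ → R}
    (hfg : ∀ n : ℕ, ∑ i ∈ range (d + 1), g i * (n.choose i : R) =
      ∑ i ∈ range (d + 1), f i * (n : R) ^ i)
    (hf : ∀ j ≤ d, hTransform d f j = hTransform d f (d - j)) :
    ∀ j ≤ d, hTransform d g j = hTransform d g (d - j) := by
  intro j hj
  set φ : ℤ → R := fun t => ∑ i ∈ range (d + 1), f i * (t : R) ^ i with hφ_def
  have hφ : (fwdDiff 1)^[d + 1] φ = 0 := by
    ext t
    have := congrFun (fwdDiff_iter_sum_mul_pow_eq_zero (n := d + 1) f) (t : R)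
    rw [fwdDiff_iter_eq_sum_shift] at this ⊢
    simpa [hφ_def] using this
  have hsymm (t : ℤ) : φ (-1 - t) = (-1) ^ d * φ t := by
    simpa [hφ_def] using sum_mul_neg_one_sub_pow_of_hTransform_symm hf (t : R)
  have hval (n : ℕ) : ∑ i ∈ range (d + 1), g i * (n.choose i : R) = φ n := by
    simp [hφ_def, hfg]
  rw [hTransform_eq_alternating_sum d g hj, hTransform_eq_alternating_sum d g (Nat.sub_le d j)]
  simp only [hval]
  exact alternating_sum_choose_symm_of_fwdDiff hφ hsymm hj

end HVector

theorem sum_card_eq_sum_fnum {β M : Type*} [AddCommMonoid M] {X : Finset (Finset β)} {d : ℕ}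
    (hX : ∀ s ∈ X, #s ≤ d) (v : ℕ → M) :
    ∑ s ∈ X, v #s = ∑ i ∈ range (d + 1), fnum X i • v i := by
  rw [← sum_fiberwise_of_maps_to (g := card) fun s hs => mem_range.2 (Nat.lt_succ_of_le (hX s hs))]
  refine sum_congr rfl fun i _ => ?_
  rw [fnum, ← sum_const]
  exact sum_congr rfl fun s hs => congrArg v (mem_filter.1 hs).2

section Subdivision

variable {α : Type*} [DecidableEq α]

theorem mem_sd {Δ c : Finset (Finset α)} :
    c ∈ sd Δ ↔ c ⊆ Δ.erase ∅ ∧ ∀ s ∈ c, ∀ t ∈ c, s ⊆ t ∨ t ⊆ s := by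
  rw [sd, mem_filter, mem_powerset]

theorem empty_mem_sd (Δ : Finset (Finset α)) : ∅ ∈ sd Δ :=
  mem_sd.2 ⟨empty_subset _, by simp⟩

theorem sup_mem_of_chain {c : Finset (Finset α)} (hc : c.Nonempty)
    (hchain : ∀ s ∈ c, ∀ t ∈ c, s ⊆ t ∨ t ⊆ s) : c.sup id ∈ c := by
  rw [← sup'_eq_sup hc]
  refine sup'_mem (c : Set (Finset α)) (fun s hs t ht => ?_) c hc id fun s hs => hs
  rcases hchain s hs t ht with h | h
  · rwa [sup_eq_right.2 h]
  · rwa [sup_eq_left.2 h]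

theorem isComplex_ssubsets {S : Finset α} (hS : S.Nonempty) : IsComplex S.ssubsets :=
  ⟨empty_mem_ssubsets hS, fun _ hs _ hts => mem_ssubsets.2 (lt_of_le_of_lt hts (mem_ssubsets.1 hs))⟩

theorem erase_sup_mem_sd_ssubsets {Δ c : Finset (Finset α)} (hc : c ∈ sd Δ) :
    c.erase (c.sup id) ∈ sd (c.sup id).ssubsets := by
  rw [mem_sd] at hc ⊢
  refine ⟨fun s hs => ?_, fun s hs t ht => hc.2 s (mem_of_mem_erase hs) t (mem_of_mem_erase ht)⟩
  obtain ⟨hs_top, hs⟩ := mem_erase.1 hs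
  refine mem_erase.2 ⟨ne_of_mem_erase (hc.1 hs), mem_ssubsets.2 ?_⟩
  exact ssubset_of_subset_of_ne (le_sup (f := id) hs) hs_top

theorem insert_mem_sd {Δ c : Finset (Finset α)} (hΔ : IsComplex Δ) {S : Finset α}
    (hS : S ∈ Δ.erase ∅) (hc : c ∈ sd S.ssubsets) : insert S c ∈ sd Δ := by
  rw [mem_sd] at hc ⊢
  have below : ∀ t ∈ c, t ⊂ S := fun t ht => mem_ssubsets.1 (mem_of_mem_erase (hc.1 ht))
  have below' : ∀ t ∈ insert S c, t ⊆ S := by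
    simpa only [forall_mem_insert] using ⟨subset_rfl, fun t ht => (below t ht).subset⟩
  refine ⟨insert_subset hS fun t ht => ?_, fun s hs t ht => ?_⟩
  · exact mem_erase.2 ⟨ne_of_mem_erase (hc.1 ht),
      hΔ.2 S (mem_of_mem_erase hS) t (below t ht).subset⟩
  · rcases mem_insert.1 hs with rfl | hs'
    · exact Or.inr (below' t ht)
    rcases mem_insert.1 ht with rfl | ht'
    · exact Or.inl (below' s hs)
    exact hc.2 s hs' t ht'

theorem sup_insert_of_mem_sd_ssubsets {S : Finset α} {c : Finset (Finset α)}
    (hc : c ∈ sd S.ssubsets) : (insert S c).sup id = S := by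
  rw [sup_insert, id, sup_eq_left]
  exact Finset.sup_le fun t ht => (mem_ssubsets.1 (mem_of_mem_erase ((mem_sd.1 hc).1 ht))).subset

-- A nonempty chain of faces is its top face `S` together with a chain of proper faces of `S`.
theorem sum_erase_empty_sd {M : Type*} [AddCommMonoid M] {Δ : Finset (Finset α)}
    (hΔ : IsComplex Δ) (v : ℕ → M) :
    ∑ c ∈ (sd Δ).erase ∅, v (#c - 1) = ∑ S ∈ Δ.erase ∅, ∑ c ∈ sd S.ssubsets, v #c := by
  rw [sum_sigma']
  refine sum_nbij' (fun c => ⟨c.sup id, c.erase (c.sup id)⟩) (fun x => insert x.1 x.2)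
    (fun c hc => ?_) (fun x hx => ?_) (fun c hc => ?_) (fun x hx => ?_) (fun c hc => ?_)
  · obtain ⟨hc, hne⟩ := (mem_erase.1 hc).symm
    have htop := sup_mem_of_chain (nonempty_iff_ne_empty.2 hne) (mem_sd.1 hc).2
    exact mem_sigma.2 ⟨(mem_sd.1 hc).1 htop, erase_sup_mem_sd_ssubsets hc⟩
  · obtain ⟨hS, hx⟩ := mem_sigma.1 hx
    exact mem_erase.2 ⟨insert_ne_empty _ _, insert_mem_sd hΔ hS hx⟩
  · obtain ⟨hc, hne⟩ := (mem_erase.1 hc).symm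
    exact insert_erase (sup_mem_of_chain (nonempty_iff_ne_empty.2 hne) (mem_sd.1 hc).2)
  · obtain ⟨hS, hx⟩ := mem_sigma.1 hx
    have hnotin : x.1 ∉ x.2 := fun h =>
      (mem_ssubsets.1 (mem_of_mem_erase ((mem_sd.1 hx).1 h))).ne rfl
    simp only [sup_insert_of_mem_sd_ssubsets hx, erase_insert hnotin]
  · obtain ⟨hc, hne⟩ := (mem_erase.1 hc).symm
    rw [card_erase_of_mem (sup_mem_of_chain (nonempty_iff_ne_empty.2 hne) (mem_sd.1 hc).2)]

theorem sum_pow_card_ssubsets_add (ℓ : ℕ) (F : Finset α) :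
    ∑ G ∈ F.ssubsets, ℓ ^ #G + ℓ ^ #F = (ℓ + 1) ^ #F := by
  rw [ssubsets, sum_erase_add _ _ (mem_powerset_self F), ← sum_pow_mul_eq_add_pow]
  simp

theorem sum_choose_card_sd (ℓ : ℕ) {Δ : Finset (Finset α)} (hΔ : IsComplex Δ) :
    ∑ c ∈ sd Δ, ℓ.choose #c = ∑ F ∈ Δ, ℓ ^ #F := by
  induction ℓ generalizing Δ with
  | zero =>
    rw [sum_eq_single_of_mem ∅ (empty_mem_sd Δ) fun c _ hc =>
        Nat.choose_eq_zero_of_lt (card_pos.2 (nonempty_iff_ne_empty.2 hc)),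
      sum_eq_single_of_mem ∅ hΔ.1 fun F _ hF =>
        zero_pow (card_ne_zero.2 (nonempty_iff_ne_empty.2 hF))]
    simp
  | succ ℓ ih =>
    have pascal : ∑ c ∈ sd Δ, (ℓ + 1).choose #c =
        ∑ c ∈ sd Δ, ℓ.choose #c + ∑ c ∈ (sd Δ).erase ∅, ℓ.choose (#c - 1) := by
      rw [← add_sum_erase _ _ (empty_mem_sd Δ), ← add_sum_erase _ _ (empty_mem_sd Δ), add_assoc,
        ← sum_add_distrib]
      refine congrArg₂ _ (by simp) (sum_congr rfl fun c hc => ?_)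
      obtain ⟨k, hk⟩ := Nat.exists_eq_add_one_of_ne_zero
        (card_ne_zero.2 (nonempty_iff_ne_empty.2 (ne_of_mem_erase hc)))
      rw [hk, Nat.choose_succ_succ', Nat.add_sub_cancel, add_comm]
    have boundary (S : Finset α) (hS : S ∈ Δ.erase ∅) :
        ∑ c ∈ sd S.ssubsets, ℓ.choose #c = ∑ G ∈ S.ssubsets, ℓ ^ #G :=
      ih (isComplex_ssubsets (nonempty_iff_ne_empty.2 (ne_of_mem_erase hS)))
    rw [pascal, ih hΔ, sum_erase_empty_sd hΔ, sum_congr rfl boundary, sum_erase _ (by simp),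
      add_comm, ← sum_add_distrib]
    exact sum_congr rfl fun F _ => sum_pow_card_ssubsets_add ℓ F

theorem card_le_of_mem_sd {Δ c : Finset (Finset α)} {d : ℕ} (hdim : ∀ s ∈ Δ, #s ≤ d)
    (hc : c ∈ sd Δ) : #c ≤ d := by
  rw [mem_sd] at hc
  calc #c ≤ #(Icc 1 d) := card_le_card_of_injOn card (fun s hs => ?_) fun s hs t ht hst => ?_
    _ = d := by simp
  · obtain ⟨hne, hs⟩ := mem_erase.1 (hc.1 hs)
    exact mem_Icc.2 ⟨card_pos.2 (nonempty_iff_ne_empty.2 hne), hdim s hs⟩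
  · rcases hc.2 s hs t ht with h | h
    · exact eq_of_subset_of_card_le h hst.ge
    · exact (eq_of_subset_of_card_le h hst.le).symm

end Subdivision

/-- If the `h`-vector of a `(d-1)`-dimensional simplicial complex is reciprocal
(`h_i = h_{d-i}`), then so is the `h`-vector of its barycentric subdivision. -/
theorem hvector_sd_reciprocal {α : Type*} [DecidableEq α] (Δ : Finset (Finset α))
    (d : ℕ) (hΔ : IsComplex Δ) (hdim : HasDim Δ d)
    (hrec : ∀ i ≤ d, hnum Δ d i = hnum Δ d (d - i)) :
    ∀ j ≤ d, hnum (sd Δ) d j = hnum (sd Δ) d (d - j) := by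
  have hfg (ℓ : ℕ) : ∑ i ∈ range (d + 1), (fnum (sd Δ) i : ℤ) * (ℓ.choose i : ℤ) =
      ∑ i ∈ range (d + 1), (fnum Δ i : ℤ) * (ℓ : ℤ) ^ i := by
    have h : ∑ c ∈ sd Δ, (ℓ.choose #c : ℤ) = ∑ F ∈ Δ, (ℓ : ℤ) ^ #F := by
      exact_mod_cast sum_choose_card_sd ℓ hΔ
    rw [sum_card_eq_sum_fnum (fun c hc => card_le_of_mem_sd hdim.1 hc) fun k => (ℓ.choose k : ℤ),
      sum_card_eq_sum_fnum hdim.1 fun k => (ℓ : ℤ) ^ k] at h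
    simpa only [nsmul_eq_mul] using h
  exact hTransform_symm_of_sum_choose_eq hfg hrec
end

section
/- For d ≥ 1 and 0 ≤ j ≤ d, the identity Σ_{i=0}^{d} A(d+1,i,j+1) t^i / (1-t)^{d+1} = Σ_{r≥0} r^j (r+1)^{d-j} t^r holds as formal power series, where A(d+1,i,j+1) counts permutations σ ∈ S_{d+1} with σ(1) = j+1 and i descents. -/
open Finset

/-- The set of descent positions (0-based: `k ∈ descSet σ` means a descent between
the 1-based positions `k+1` and `k+2`) of a permutation of `Fin n`. -/
def descSet {n : ℕ} (σ : Equiv.Perm (Fin n)) : Finset (Fin n) :=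
  Finset.univ.filter (fun k => ∃ m : Fin n, (m : ℕ) = (k : ℕ) + 1 ∧ σ m < σ k)

/-- The number of descents of a permutation of `Fin n`. -/
def des {n : ℕ} (σ : Equiv.Perm (Fin n)) : ℕ := (descSet σ).card

/-- `A d i j` : the number of permutations `σ` of `{1,…,d}` with `σ(1) = j` and
exactly `i` descents (in particular `A d i j = 0` for `i < 0` or `i ≥ d`). -/
noncomputable def A (d : ℕ) (i : ℤ) (j : ℕ) : ℕ :=
  Nat.card {σ : Equiv.Perm (Fin d) //
    (∀ k : Fin d, (k : ℕ) = 0 → (σ k : ℕ) + 1 = j) ∧ (des σ : ℤ) = i}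


/-!
Prepending a value `a` to a permutation of `{0, …, n}` (and shifting the values `≥ a` up) is a
bijection onto the permutations of `{0, …, n+1}` starting with `a`, and it creates a new descent
exactly when the old first value is `< a`. So the descent polynomials `P n j` with first value `j`
satisfy `P (n+1) j = t Σ_{m<j} P n m + Σ_{j≤m≤n} P n m`. The series
`F n j = Σ_r rʲ (r+1)^(n-j) tʳ` satisfy the same recursion up to a factor `1 - t`, because each of
the two sums of coefficients is a geometric sum `Σ xᵐ (x+1)^(k-1-m) = (x+1)^k - x^k`.
Induction on `n` gives `P n j = F n j (1 - t)^(n+1)`.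
-/

open Equiv PowerSeries

section Insertion

variable {n : ℕ}

/-- Prepend the value `a` to `τ`, shifting the values `≥ a` up by one. -/
def insertFirst (a : Fin (n + 1)) (τ : Perm (Fin n)) : Perm (Fin (n + 1)) :=
  (finSuccEquiv n).trans ((optionCongr τ).trans (finSuccEquiv' a).symm)

@[simp]
lemma insertFirst_zero (a : Fin (n + 1)) (τ : Perm (Fin n)) : insertFirst a τ 0 = a := by
  simp [insertFirst]

@[simp]
lemma insertFirst_succ (a : Fin (n + 1)) (τ : Perm (Fin n)) (k : Fin n) :
    insertFirst a τ k.succ = a.succAbove (τ k) := by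
  simp [insertFirst]

lemma insertFirst_bijective :
    Function.Bijective fun p : Fin (n + 1) × Perm (Fin n) => insertFirst p.1 p.2 := by
  refine (Fintype.bijective_iff_injective_and_card _).2 ⟨?_, ?_⟩
  · rintro ⟨a, τ⟩ ⟨b, υ⟩ h
    obtain rfl : a = b := by simpa using congr($h 0)
    refine Prod.ext rfl (Equiv.ext fun k => (Fin.succAbove_right_injective (p := a)) ?_)
    simpa using congr($h k.succ)
  · simp [Fintype.card_perm, Nat.factorial_succ]

end Insertion

section Descents

variable {n : ℕ}

lemma des_eq_card (σ : Perm (Fin (n + 1))) : des σ = #{k : Fin n | σ k.succ < σ k.castSucc} := by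
  have hmap : descSet σ = Finset.map Fin.castSuccEmb {k : Fin n | σ k.succ < σ k.castSucc} := by
    ext k
    induction k using Fin.lastCases with
    | last => simpa [descSet] using fun m hm => absurd hm m.isLt.ne
    | cast k =>
      have hsucc (m : Fin (n + 1)) : (m : ℕ) = k + 1 ↔ m = k.succ := by simp [Fin.ext_iff]
      simp [descSet, hsucc]
  rw [des, hmap, card_map]

lemma des_le (σ : Perm (Fin (n + 1))) : des σ ≤ n :=
  des_eq_card σ ▸ (card_filter_le _ _).trans_eq (card_fin n)

lemma des_insertFirst (a : Fin (n + 2)) (τ : Perm (Fin (n + 1))) :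
    des (insertFirst a τ) = (if (τ 0 : ℕ) < a then 1 else 0) + des τ := by
  rw [des_eq_card, des_eq_card, card_filter, card_filter, Fin.sum_univ_succ]
  congr 1
  · simp only [Fin.castSucc_zero, insertFirst_zero, insertFirst_succ,
      Fin.succAbove_lt_iff_castSucc_lt]
    simp only [Fin.lt_def, Fin.val_castSucc]
  · refine sum_congr rfl fun k _ => ?_
    simp only [← Fin.succ_castSucc, insertFirst_succ, Fin.succAbove_lt_succAbove_iff]

end Descents

section GeneratingFunctions

variable (R : Type*) [CommRing R]

/-- The descent polynomial `Σ_i A(n+1, i, j+1) tⁱ` of the paper (values in `Fin` are 0-based). -/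
noncomputable def descentGenFun (n j : ℕ) : R⟦X⟧ :=
  ∑ σ : Perm (Fin (n + 1)) with (σ 0 : ℕ) = j, X ^ des σ

lemma descentGenFun_succ (n j : ℕ) (hj : j ≤ n + 1) :
    descentGenFun R (n + 1) j =
      X * ∑ m ∈ range j, descentGenFun R n m + ∑ m ∈ Ico j (n + 1), descentGenFun R n m := by
  let a : Fin (n + 2) := ⟨j, by omega⟩
  have hinsert : descentGenFun R (n + 1) j =
      ∑ τ : Perm (Fin (n + 1)), X ^ (if (τ 0 : ℕ) < j then 1 else 0) * X ^ des τ := by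
    symm
    refine sum_nbij (insertFirst a) (fun τ _ => by simp [a]) ?_ ?_ ?_
    · exact fun τ _ υ _ h =>
        congr_arg Prod.snd (insertFirst_bijective.1 (a₁ := (a, τ)) (a₂ := (a, υ)) h)
    · intro σ hσ
      obtain ⟨⟨b, τ⟩, rfl⟩ := insertFirst_bijective.2 σ
      obtain rfl : b = a := Fin.ext (by simpa using hσ)
      exact ⟨τ, mem_univ _, rfl⟩
    · intro τ _
      rw [des_insertFirst, pow_add]
  have hfiber : ∀ m ∈ range (n + 1),
      ∑ τ : Perm (Fin (n + 1)) with (τ 0 : ℕ) = m,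
          X ^ (if (τ 0 : ℕ) < j then 1 else 0) * X ^ des τ =
        X ^ (if m < j then 1 else 0) * descentGenFun R n m := by
    intro m _
    rw [descentGenFun, mul_sum]
    exact sum_congr rfl fun τ hτ => by rw [(mem_filter.1 hτ).2]
  rw [hinsert, ← sum_fiberwise_of_maps_to (g := fun τ : Perm (Fin (n + 1)) => (τ 0 : ℕ))
    (t := range (n + 1)) (fun τ _ => mem_range.2 (τ 0).isLt), sum_congr rfl hfiber,
    ← sum_range_add_sum_Ico _ (by omega : j ≤ n + 1), mul_sum]
  congr 1
  · exact sum_congr rfl fun m hm => by rw [if_pos (mem_range.1 hm), pow_one]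
  · exact sum_congr rfl fun m hm => by rw [if_neg (mem_Ico.1 hm).1.not_gt, pow_zero, one_mul]

lemma A_succ_eq_card (n j i : ℕ) :
    A (n + 1) i (j + 1) = #{σ : Perm (Fin (n + 1)) | (σ 0 : ℕ) = j ∧ des σ = i} := by
  rw [A, Nat.card_eq_fintype_card, Fintype.card_subtype]
  congr 1
  ext σ
  simp [Fin.val_eq_zero_iff]

lemma sum_monomial_A_eq_descentGenFun (n j : ℕ) :
    ∑ i ∈ range (n + 1), monomial i (A (n + 1) i (j + 1) : R) = descentGenFun R n j := by
  rw [descentGenFun, ← sum_fiberwise_of_maps_to (g := des) (t := range (n + 1))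
    (fun σ _ => mem_range.2 (Nat.lt_succ_of_le (des_le σ)))]
  refine sum_congr rfl fun i _ => ?_
  rw [sum_congr rfl fun σ hσ => by rw [(mem_filter.1 hσ).2], sum_const, filter_filter,
    A_succ_eq_card, X_pow_eq, ← map_nsmul, nsmul_one]

def mixedPowSeries (d j : ℕ) : R⟦X⟧ :=
  mk fun r => (r : R) ^ j * ((r : R) + 1) ^ (d - j)

variable {R}

lemma geom_sum₂_add_one (x : R) (n : ℕ) :
    ∑ i ∈ range n, x ^ i * (x + 1) ^ (n - 1 - i) = (x + 1) ^ n - x ^ n := by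
  have h := geom_sum₂_mul x (x + 1) n
  rw [show x - (x + 1) = -1 by ring] at h
  linear_combination -h

lemma sum_range_pow_mul_add_one_pow {j d : ℕ} (x : R) (hj : j ≤ d + 1) :
    ∑ m ∈ range j, x ^ m * (x + 1) ^ (d - m) =
      (x + 1) ^ (d + 1) - x ^ j * (x + 1) ^ (d + 1 - j) := by
  calc ∑ m ∈ range j, x ^ m * (x + 1) ^ (d - m)
      = (∑ m ∈ range j, x ^ m * (x + 1) ^ (j - 1 - m)) * (x + 1) ^ (d + 1 - j) := by
        rw [sum_mul]
        refine sum_congr rfl fun m hm => ?_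
        rw [mul_assoc, ← pow_add, show j - 1 - m + (d + 1 - j) = d - m by
          have := mem_range.1 hm; omega]
    _ = _ := by
      rw [geom_sum₂_add_one, sub_mul, ← pow_add, Nat.add_sub_cancel' hj]

lemma sum_Ico_pow_mul_add_one_pow {j d : ℕ} (x : R) (hj : j ≤ d + 1) :
    ∑ m ∈ Ico j (d + 1), x ^ m * (x + 1) ^ (d - m) =
      x ^ j * (x + 1) ^ (d + 1 - j) - x ^ (d + 1) := by
  calc ∑ m ∈ Ico j (d + 1), x ^ m * (x + 1) ^ (d - m)
      = x ^ j * ∑ m ∈ range (d + 1 - j), x ^ m * (x + 1) ^ (d + 1 - j - 1 - m) := by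
        rw [sum_Ico_eq_sum_range, mul_sum]
        refine sum_congr rfl fun m hm => ?_
        rw [pow_add, mul_assoc, show d - (j + m) = d + 1 - j - 1 - m by omega]
    _ = _ := by
      rw [geom_sum₂_add_one, mul_sub, ← pow_add, Nat.add_sub_cancel' hj]

lemma X_mul_sum_add_sum_Ico_mixedPowSeries {d j : ℕ} (hj : j ≤ d + 1) :
    X * ∑ m ∈ range j, mixedPowSeries R d m + ∑ m ∈ Ico j (d + 1), mixedPowSeries R d m =
      mixedPowSeries R (d + 1) j * (1 - X) := by
  ext (_ | s)
  · have h := sum_Ico_pow_mul_add_one_pow (0 : R) hj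
    simp only [mixedPowSeries, map_add, map_sum, coeff_zero_X_mul, coeff_mk, mul_sub, mul_one,
      map_sub, coeff_zero_mul_X] at h ⊢
    rw [zero_pow d.succ_ne_zero] at h
    simpa only [Nat.cast_zero, zero_add] using h
  · have h₁ := sum_range_pow_mul_add_one_pow (s : R) hj
    have h₂ := sum_Ico_pow_mul_add_one_pow ((s : R) + 1) hj
    simp only [mixedPowSeries, map_add, map_sum, coeff_succ_X_mul, coeff_mk, mul_sub, mul_one,
      map_sub, coeff_succ_mul_X] at h₁ h₂ ⊢
    push_cast
    rw [h₁, h₂]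
    ring

theorem descentGenFun_eq (n j : ℕ) (hj : j ≤ n) :
    descentGenFun R n j = mixedPowSeries R n j * (1 - X) ^ (n + 1) := by
  induction n generalizing j with
  | zero =>
    obtain rfl : j = 0 := by omega
    have hconst : mixedPowSeries R 0 0 = PowerSeries.mk 1 := by ext; simp [mixedPowSeries]
    simp [descentGenFun, hconst, mk_one_mul_one_sub_eq_one, Nat.le_zero.1 (des_le _)]
  | succ n ih =>
    have hsum (s : Finset ℕ) (hs : s ⊆ range (n + 1)) :
        ∑ m ∈ s, descentGenFun R n m = (∑ m ∈ s, mixedPowSeries R n m) * (1 - X) ^ (n + 1) := by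
      rw [sum_mul]
      exact sum_congr rfl fun m hm => ih m (Nat.lt_succ_iff.1 (mem_range.1 (hs hm)))
    rw [descentGenFun_succ R n j hj, hsum _ (range_subset_range.2 (by omega)),
      hsum _ (fun m hm => mem_range.2 (mem_Ico.1 hm).2), ← mul_assoc, ← add_mul,
      X_mul_sum_add_sum_Ico_mixedPowSeries hj]
    ring

end GeneratingFunctions

open PowerSeries in
theorem A_generating_function_general (d j : ℕ) (hj : j ≤ d) :
    (∑ i ∈ Finset.range (d + 1),
        PowerSeries.monomial (R := ℚ) i ((A (d + 1) (i : ℤ) (j + 1) : ℚ))) =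
      PowerSeries.mk
          (fun r : ℕ => (r : ℚ) ^ j * ((r : ℚ) + 1) ^ (d - j)) *
        (1 - PowerSeries.X) ^ (d + 1) := by
  rw [sum_monomial_A_eq_descentGenFun, descentGenFun_eq d j hj]
  rfl

open PowerSeries in
/-- The generating function identity
`(Σ_{i=0}^{d} A(d+1,i,j+1) tⁱ) / (1-t)^{d+1} = Σ_{r≥0} rʲ (r+1)^{d-j} tʳ`,
stated as an identity of formal power series over `ℚ`. -/
theorem A_generating_function (d j : ℕ) (hd : 1 ≤ d) (hj : j ≤ d) :
    (∑ i ∈ Finset.range (d + 1),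
        PowerSeries.monomial (R := ℚ) i ((A (d + 1) (i : ℤ) (j + 1) : ℚ))) =
      PowerSeries.mk
          (fun r : ℕ => (r : ℚ) ^ j * ((r : ℚ) + 1) ^ (d - j)) *
        (1 - PowerSeries.X) ^ (d + 1) :=
  A_generating_function_general d j hj
end
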